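/- For p = 1, m, n natural with 0 ≤ n ≤ m, and real d₁ > −1: ∫₀^∞ z^(2n)/(z⁴+2d₁z²+1)^(m+1) dz = 2^(−m)·Σ_{j=0}^{m−n} 4^j·C(m−n+j, 2j)·∫₀^∞ z^(2(m−j))/((1+d₁)z²+2)^(m+1) dz. -/

import Mathlib

/-! Under `z ↦ 1 / z` the integral does not change when `z ^ (2n)` is replaced by
`z ^ (2(2m+1-n))`, so twice the integral has numerator `t ^ n * (t ^ (2r+1) + 1)` with `t = z²`,
`r = m - n`. This factors as `(t + 1) * t ^ m * ∑ C(r+j, 2j) u ^ (2j)` with `u = z - 1/z`, while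
`z⁴ + 2d₁z² + 1 = z² (u² + 2(1 + d₁))`. The integrand is therefore `(1 + z⁻²)` times a function
of `u`, and Glasser's substitution `u = z - 1/z` turns the integral over `(0, ∞)` into one over
`ℝ`. Each resulting term is even, and the substitution `u = 2/z` gives the stated integrals. -/

open MeasureTheory Set

section ChooseSums

open Finset

variable {R : Type*} [CommSemiring R]

def evenChooseSum (r : ℕ) (x y : R) : R :=
  ∑ j ∈ range (r + 1), ((r + j).choose (2 * j) : R) * x ^ j * y ^ (r - j)

def oddChooseSum (r : ℕ) (x y : R) : R :=
  ∑ j ∈ range (r + 1), ((r + 1 + j).choose (2 * j + 1) : R) * x ^ j * y ^ (r - j)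

theorem evenChooseSum_succ (r : ℕ) (x y : R) :
    evenChooseSum (r + 1) x y = y * evenChooseSum r x y + x * oddChooseSum r x y := by
  set c : ℕ → R := fun j ↦ ((r + 1 + j).choose (2 * j + 2) : R) * x ^ (j + 1) * y ^ (r - j)
  have hy : y * evenChooseSum r x y = ∑ j ∈ range (r + 1), c j + y ^ (r + 1) := by
    have hc : c r = 0 := by simp [c, Nat.choose_eq_zero_of_lt (by omega : r + 1 + r < 2 * r + 2)]
    rw [sum_range_succ, hc, add_zero, evenChooseSum, mul_sum, sum_range_succ']
    congr 1
    · refine sum_congr rfl fun j hj ↦ ?_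
      simp only [c]
      rw [show r - j = r - (j + 1) + 1 by grind, pow_succ]
      ring_nf
    · simp [pow_succ, mul_comm]
  calc evenChooseSum (r + 1) x y
      = ∑ j ∈ range (r + 1), (((r + 1 + j).choose (2 * j + 1) : R)
          + (r + 1 + j).choose (2 * j + 2)) * x ^ (j + 1) * y ^ (r - j) + y ^ (r + 1) := by
        rw [evenChooseSum, sum_range_succ']
        congr 1
        · refine sum_congr rfl fun j _ ↦ ?_
          rw [show r + 1 + (j + 1) = r + 1 + j + 1 by ring,
            show 2 * (j + 1) = 2 * j + 1 + 1 by ring, Nat.choose_succ_succ', Nat.add_sub_add_right, Nat.cast_add]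
        · simp
    _ = x * oddChooseSum r x y + (∑ j ∈ range (r + 1), c j + y ^ (r + 1)) := by
        rw [oddChooseSum, mul_sum, ← add_assoc, ← sum_add_distrib]
        congr 1
        refine sum_congr rfl fun j _ ↦ ?_
        ring
    _ = y * evenChooseSum r x y + x * oddChooseSum r x y := by rw [hy, add_comm]

theorem oddChooseSum_succ (r : ℕ) (x y : R) :
    oddChooseSum (r + 1) x y = evenChooseSum (r + 1) x y + y * oddChooseSum r x y := by
  set c : ℕ → R := fun j ↦ ((r + 1 + j).choose (2 * j + 1) : R) * x ^ j * y ^ (r + 1 - j)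
  have hy : y * oddChooseSum r x y = ∑ j ∈ range (r + 2), c j := by
    have hc : c (r + 1) = 0 := by
      simp [c, Nat.choose_eq_zero_of_lt (by omega : r + 1 + (r + 1) < 2 * (r + 1) + 1)]
    rw [sum_range_succ, hc, add_zero, oddChooseSum, mul_sum]
    refine sum_congr rfl fun j hj ↦ ?_
    simp only [c]
    rw [show r + 1 - j = r - j + 1 by grind, pow_succ]
    ring
  rw [hy, evenChooseSum, oddChooseSum, ← sum_add_distrib]
  refine sum_congr rfl fun j _ ↦ ?_
  rw [show r + 1 + 1 + j = r + 1 + j + 1 by ring, Nat.choose_succ_succ', Nat.cast_add]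
  ring

theorem add_one_mul_evenChooseSum_and_sq_sub_one_mul_oddChooseSum {R : Type*} [CommRing R]
    (r : ℕ) (t : R) :
    (t + 1) * evenChooseSum r ((t - 1) ^ 2) t = t ^ (2 * r + 1) + 1 ∧
      (t ^ 2 - 1) * oddChooseSum r ((t - 1) ^ 2) t = t ^ (2 * r + 2) - 1 := by
  induction r with
  | zero => simp [evenChooseSum, oddChooseSum]
  | succ r ih =>
    have h₁ : (t + 1) * evenChooseSum (r + 1) ((t - 1) ^ 2) t = t ^ (2 * (r + 1) + 1) + 1 := by
      rw [evenChooseSum_succ]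
      linear_combination t * ih.1 + (t - 1) * ih.2
    refine ⟨h₁, ?_⟩
    rw [oddChooseSum_succ]
    linear_combination (t - 1) * h₁ + t * ih.2

theorem evenChooseSum_mul_right (r : ℕ) (w y : R) :
    evenChooseSum r (w * y) y = y ^ r * evenChooseSum r w 1 := by
  rw [evenChooseSum, evenChooseSum, mul_sum]
  refine sum_congr rfl fun j hj ↦ ?_
  rw [one_pow, mul_one, mul_pow, ← pow_sub_mul_pow y (by grind : j ≤ r)]
  ring

end ChooseSums

open Finset in
theorem pow_add_pow_div_quartic_eq {K : Type*} [Field K] (d : K) {m n : ℕ} (hn : n ≤ m) {z : K}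
    (hz : z ≠ 0) :
    (z ^ (2 * n) + z ^ (2 * (2 * m + 1 - n))) / (z ^ 4 + 2 * d * z ^ 2 + 1) ^ (m + 1)
      = (1 + (z ^ 2)⁻¹) * ∑ j ∈ range (m - n + 1), ((m - n + j).choose (2 * j) : K)
          * ((z - z⁻¹) ^ (2 * j) / ((z - z⁻¹) ^ 2 + 2 * (1 + d)) ^ (m + 1)) := by
  set u := z - z⁻¹
  have hu : (z ^ 2 - 1) ^ 2 = u ^ 2 * z ^ 2 := by simp only [u]; field_simp
  have hE := (add_one_mul_evenChooseSum_and_sq_sub_one_mul_oddChooseSum (m - n) (z ^ 2)).1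
  rw [hu, evenChooseSum_mul_right] at hE
  have hD : z ^ 4 + 2 * d * z ^ 2 + 1 = z ^ 2 * (u ^ 2 + 2 * (1 + d)) := by
    simp only [u]; field_simp; ring
  have hsum : ∑ j ∈ range (m - n + 1), ((m - n + j).choose (2 * j) : K)
      * (u ^ (2 * j) / (u ^ 2 + 2 * (1 + d)) ^ (m + 1))
      = evenChooseSum (m - n) (u ^ 2) 1 / (u ^ 2 + 2 * (1 + d)) ^ (m + 1) := by
    simp [evenChooseSum, sum_div, pow_mul, mul_div_assoc]
  have hpow : z ^ (2 * (2 * m + 1 - n)) = (z ^ 2) ^ n * (z ^ 2) ^ (2 * (m - n) + 1) := by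
    rw [← pow_mul, ← pow_mul, ← pow_add]; congr 1; omega
  have htm : (z ^ 2) ^ (m + 1) = (z ^ 2) ^ n * (z ^ 2) ^ (m - n) * z ^ 2 := by
    rw [← pow_add, ← pow_succ]; congr 1; omega
  rw [hsum, hD, hpow, pow_mul, ← mul_one_add, add_comm 1, ← hE, mul_pow, ← div_div,
    ← mul_div_assoc, htm]
  congr 1
  field_simp

theorem integrable_div_of_abs_le_of_le {N D : ℝ → ℝ} (hN : Continuous N) (hD : Continuous D)
    {k : ℕ} {δ : ℝ} (hδ : 0 < δ) (hN_le : ∀ x, |N x| ≤ (1 + x ^ 2) ^ k)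
    (hD_ge : ∀ x, δ * (1 + x ^ 2) ^ (k + 1) ≤ D x) : Integrable fun x ↦ N x / D x := by
  have hD_pos (x : ℝ) : 0 < D x := (mul_pos hδ (by positivity)).trans_le (hD_ge x)
  refine (integrable_inv_one_add_sq.const_mul δ⁻¹).mono'
    (hN.div hD fun x ↦ (hD_pos x).ne').aestronglyMeasurable (.of_forall fun x ↦ ?_)
  rw [Real.norm_eq_abs, abs_div, abs_of_pos (hD_pos x)]
  calc |N x| / D x ≤ (1 + x ^ 2) ^ k / (δ * (1 + x ^ 2) ^ (k + 1)) :=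
        div_le_div₀ (by positivity) (hN_le x) (by positivity) (hD_ge x)
    _ = δ⁻¹ * (1 + x ^ 2)⁻¹ := by field_simp; ring

theorem abs_pow_two_mul_le_one_add_sq_pow (x : ℝ) {a k : ℕ} (h : a ≤ k) :
    |x ^ (2 * a)| ≤ (1 + x ^ 2) ^ k := by
  rw [pow_mul, abs_of_nonneg (by positivity)]
  calc (x ^ 2) ^ a ≤ (1 + x ^ 2) ^ a := pow_le_pow_left₀ (sq_nonneg x) (by linarith) a
    _ ≤ (1 + x ^ 2) ^ k := pow_le_pow_right₀ (le_add_of_nonneg_right (sq_nonneg x)) h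

theorem integrable_pow_div_sq_add_pow {c : ℝ} (hc : 0 < c) {j m : ℕ} (hj : j ≤ m) :
    Integrable fun u : ℝ ↦ u ^ (2 * j) / (u ^ 2 + c) ^ (m + 1) := by
  have hδ : 0 < min 1 c := lt_min one_pos hc
  refine integrable_div_of_abs_le_of_le (by fun_prop) (by fun_prop) (pow_pos hδ (m + 1))
    (fun x ↦ abs_pow_two_mul_le_one_add_sq_pow x hj) fun x ↦ ?_
  rw [← mul_pow]
  refine pow_le_pow_left₀ (by positivity) ?_ _
  nlinarith [min_le_left 1 c, min_le_right 1 c, sq_nonneg x]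

theorem integrable_pow_div_quartic_pow {d : ℝ} (hd : -1 < d) {a m : ℕ} (ha : a ≤ 2 * m + 1) :
    Integrable fun z : ℝ ↦ z ^ (2 * a) / (z ^ 4 + 2 * d * z ^ 2 + 1) ^ (m + 1) := by
  set δ := min 1 ((1 + d) / 2)
  have hδ : 0 < δ := lt_min one_pos (by linarith)
  refine integrable_div_of_abs_le_of_le (by fun_prop) (by fun_prop) (pow_pos hδ (m + 1))
    (fun x ↦ abs_pow_two_mul_le_one_add_sq_pow x ha) fun x ↦ ?_
  rw [show 2 * m + 1 + 1 = 2 * (m + 1) by ring, pow_mul, ← mul_pow]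
  refine pow_le_pow_left₀ (by positivity) ?_ _
  nlinarith [mul_nonneg (sub_nonneg.2 (min_le_left 1 ((1 + d) / 2))) (sq_nonneg (x ^ 2 - 1)),
    mul_nonneg (sub_nonneg.2 (min_le_right 1 ((1 + d) / 2))) (sq_nonneg x)]

section ChangeOfVariables

variable {E : Type*} [NormedAddCommGroup E] [NormedSpace ℝ E]

theorem integral_Ioi_eq_integral_comp_const_div {c : ℝ} (hc : 0 < c) (g : ℝ → E) :
    ∫ x in Ioi 0, g x = ∫ z in Ioi 0, (c / z ^ 2) • g (c / z) := by
  have himage : (fun z ↦ c / z) '' Ioi 0 = Ioi 0 := by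
    refine Subset.antisymm (image_subset_iff.2 fun z hz ↦ div_pos hc hz) fun x hx ↦
      ⟨c / x, div_pos hc hx, div_div_cancel₀ hc.ne'⟩
  have hderiv (z : ℝ) (hz : z ∈ Ioi 0) :
      HasDerivWithinAt (fun z ↦ c / z) (-(c / z ^ 2)) (Ioi 0) z := by
    simpa [div_eq_mul_inv] using ((hasDerivAt_inv (ne_of_gt hz)).const_mul c).hasDerivWithinAt
  have hinj : InjOn (fun z ↦ c / z) (Ioi 0) := fun a _ b _ h ↦ by
    simpa [div_eq_mul_inv, hc.ne'] using h
  conv_lhs => rw [← himage]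
  rw [integral_image_eq_integral_abs_deriv_smul measurableSet_Ioi hderiv hinj]
  refine setIntegral_congr_fun measurableSet_Ioi fun z hz ↦ ?_
  rw [abs_neg, abs_of_pos (div_pos hc (pow_pos hz 2))]

theorem integral_eq_integral_Ioi_comp_sub_inv (g : ℝ → E) :
    ∫ x, g x = ∫ z in Ioi 0, (1 + (z ^ 2)⁻¹) • g (z - z⁻¹) := by
  have himage : (fun z : ℝ ↦ z - z⁻¹) '' Ioi 0 = univ := by
    refine eq_univ_of_forall fun u ↦ ?_
    have hs := Real.sq_sqrt (by positivity : 0 ≤ u ^ 2 + 4)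
    have hpos : 0 < u + √(u ^ 2 + 4) := by nlinarith [Real.sqrt_nonneg (u ^ 2 + 4)]
    refine ⟨(u + √(u ^ 2 + 4)) / 2, half_pos hpos, ?_⟩
    field_simp
    linear_combination hs
  have hderiv (z : ℝ) (hz : z ∈ Ioi 0) :
      HasDerivWithinAt (fun z ↦ z - z⁻¹) (1 + (z ^ 2)⁻¹) (Ioi 0) z := by
    simpa using ((hasDerivAt_id' z).fun_sub (hasDerivAt_inv (ne_of_gt hz))).hasDerivWithinAt
  have hmono : StrictMonoOn (fun z : ℝ ↦ z - z⁻¹) (Ioi 0) := fun a ha b hb hab ↦ by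
    have := inv_strictAntiOn ha hb hab
    simp only
    linarith
  rw [← setIntegral_univ, ← himage,
    integral_image_eq_integral_abs_deriv_smul measurableSet_Ioi hderiv hmono.injOn]
  refine setIntegral_congr_fun measurableSet_Ioi fun z hz ↦ ?_
  rw [abs_of_pos (by positivity)]

end ChangeOfVariables

theorem integral_Ioi_pow_div_quartic_pow_symm (d : ℝ) {a m : ℕ} (ha : a ≤ 2 * m + 1) :
    ∫ z in Ioi 0, z ^ (2 * a) / (z ^ 4 + 2 * d * z ^ 2 + 1) ^ (m + 1)
      = ∫ z in Ioi 0, z ^ (2 * (2 * m + 1 - a)) / (z ^ 4 + 2 * d * z ^ 2 + 1) ^ (m + 1) := by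
  obtain ⟨k, hk⟩ := Nat.exists_eq_add_of_le ha
  rw [hk, Nat.add_sub_cancel_left, integral_Ioi_eq_integral_comp_const_div one_pos]
  refine setIntegral_congr_fun measurableSet_Ioi fun z hz ↦ ?_
  have hz : z ≠ 0 := ne_of_gt hz
  set D := z ^ 4 + 2 * d * z ^ 2 + 1
  have hD : (1 / z) ^ 4 + 2 * d * (1 / z) ^ 2 + 1 = D / z ^ 4 := by field_simp; ring
  have hpow : z ^ (4 * (m + 1)) = z ^ (2 * a) * z ^ (2 * k) * z ^ 2 := by
    rw [← pow_add, ← pow_add]; congr 1; omega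
  simp only [smul_eq_mul]
  rw [hD, div_pow, div_pow, one_pow, ← pow_mul, hpow]
  rcases eq_or_ne D 0 with h | h
  · simp [h]
  · field_simp

theorem two_mul_integral_Ioi_pow_div_quartic_pow {d : ℝ} (hd : -1 < d) {a m : ℕ}
    (ha : a ≤ 2 * m + 1) :
    2 * ∫ z in Ioi 0, z ^ (2 * a) / (z ^ 4 + 2 * d * z ^ 2 + 1) ^ (m + 1)
      = ∫ z in Ioi 0,
          (z ^ (2 * a) + z ^ (2 * (2 * m + 1 - a))) / (z ^ 4 + 2 * d * z ^ 2 + 1) ^ (m + 1) := by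
  rw [two_mul]
  nth_rewrite 2 [integral_Ioi_pow_div_quartic_pow_symm d ha]
  rw [← integral_add (integrable_pow_div_quartic_pow hd ha).integrableOn
    (integrable_pow_div_quartic_pow hd (by omega)).integrableOn]
  simp_rw [add_div]

theorem integral_pow_div_sq_add_pow_eq (a : ℝ) {j m : ℕ} (hj : j ≤ m) :
    ∫ u, u ^ (2 * j) / (u ^ 2 + 2 * a) ^ (m + 1)
      = 2 * 4 ^ j / 2 ^ m * ∫ z in Ioi 0, z ^ (2 * (m - j)) / (a * z ^ 2 + 2) ^ (m + 1) := by
  have heven : ∫ u, u ^ (2 * j) / (u ^ 2 + 2 * a) ^ (m + 1)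
      = 2 * ∫ u in Ioi 0, u ^ (2 * j) / (u ^ 2 + 2 * a) ^ (m + 1) := by
    rw [← integral_comp_abs (f := fun u ↦ u ^ (2 * j) / (u ^ 2 + 2 * a) ^ (m + 1))]
    simp [pow_mul, sq_abs]
  rw [heven, integral_Ioi_eq_integral_comp_const_div two_pos, mul_div_assoc, mul_assoc,
    ← integral_const_mul ((4 : ℝ) ^ j / 2 ^ m)]
  congr 1
  refine setIntegral_congr_fun measurableSet_Ioi fun z hz ↦ ?_
  have hz : z ≠ 0 := ne_of_gt hz
  have hQ : (2 / z) ^ 2 + 2 * a = 2 * (a * z ^ 2 + 2) / z ^ 2 := by field_simp; ring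
  have hpow : z ^ (2 * (m + 1)) = z ^ (2 * (m - j)) * z ^ (2 * j) * z ^ 2 := by
    rw [← pow_add, ← pow_add]; congr 1; omega
  simp only [smul_eq_mul]
  rw [hQ, div_pow, div_pow, mul_pow, ← pow_mul, hpow, show (4 : ℝ) ^ j = 2 ^ (2 * j) by
    rw [pow_mul]; norm_num]
  rcases eq_or_ne (a * z ^ 2 + 2) 0 with h | h
  · simp [h]
  · field_simp
    ring

theorem reduction_formula_p1 (m n : ℕ) (hn : n ≤ m) (d₁ : ℝ) (hd : -1 < d₁) :
    ∫ z in Set.Ioi (0 : ℝ), z ^ (2 * n) / (z ^ 4 + 2 * d₁ * z ^ 2 + 1) ^ (m + 1)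
      = 2 ^ (-(m : ℝ))
        * ∑ j ∈ Finset.range (m - n + 1),
            4 ^ j * (Nat.choose (m - n + j) (2 * j) : ℝ)
              * ∫ z in Set.Ioi (0 : ℝ),
                  z ^ (2 * (m - j)) / ((1 + d₁) * z ^ 2 + 2) ^ (m + 1) := by
  have hc : 0 < 2 * (1 + d₁) := by linarith
  have hdouble : 2 * ∫ z in Ioi (0 : ℝ), z ^ (2 * n) / (z ^ 4 + 2 * d₁ * z ^ 2 + 1) ^ (m + 1)
      = 2 * ((2 ^ m)⁻¹ * ∑ j ∈ Finset.range (m - n + 1), 4 ^ j * ((m - n + j).choose (2 * j) : ℝ)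
          * ∫ z in Ioi (0 : ℝ), z ^ (2 * (m - j)) / ((1 + d₁) * z ^ 2 + 2) ^ (m + 1)) := by
    calc _ = ∫ z in Ioi (0 : ℝ),
          (z ^ (2 * n) + z ^ (2 * (2 * m + 1 - n))) / (z ^ 4 + 2 * d₁ * z ^ 2 + 1) ^ (m + 1) :=
          two_mul_integral_Ioi_pow_div_quartic_pow hd (by omega)
      _ = ∫ z in Ioi (0 : ℝ), (1 + (z ^ 2)⁻¹) • ∑ j ∈ Finset.range (m - n + 1),
          ((m - n + j).choose (2 * j) : ℝ)
            * ((z - z⁻¹) ^ (2 * j) / ((z - z⁻¹) ^ 2 + 2 * (1 + d₁)) ^ (m + 1)) :=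
          setIntegral_congr_fun measurableSet_Ioi fun z hz ↦
            pow_add_pow_div_quartic_eq d₁ hn (ne_of_gt hz)
      _ = ∫ u, ∑ j ∈ Finset.range (m - n + 1),
          ((m - n + j).choose (2 * j) : ℝ) * (u ^ (2 * j) / (u ^ 2 + 2 * (1 + d₁)) ^ (m + 1)) := by
          rw [integral_eq_integral_Ioi_comp_sub_inv]
      _ = ∑ j ∈ Finset.range (m - n + 1),
          ((m - n + j).choose (2 * j) : ℝ)
            * ∫ u, u ^ (2 * j) / (u ^ 2 + 2 * (1 + d₁)) ^ (m + 1) := by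
          rw [integral_finsetSum _ fun j hj ↦
            (integrable_pow_div_sq_add_pow hc (by grind)).const_mul _]
          simp_rw [integral_const_mul]
      _ = _ := by
          rw [Finset.mul_sum, Finset.mul_sum]
          refine Finset.sum_congr rfl fun j hj ↦ ?_
          rw [integral_pow_div_sq_add_pow_eq (1 + d₁) (by grind)]
          ring
  rw [Real.rpow_neg zero_le_two, Real.rpow_natCast]
  exact mul_left_cancel₀ two_ne_zero hdouble
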